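/- Let X and Y be Banach spaces, y ∈ Y fixed, and μ₀ a Borel probability measure on X satisfying ∫_X exp(κ‖u‖_X) dμ₀(u) < ∞ for a constant κ > 0. Let Φ and Φ_N (N ∈ ℕ) be potentials X → ℝ, measurable and such that, uniformly in N: (i) there are α₁ ≥ 0 and M ∈ ℝ with Φ(u;y) ≥ M − α₁‖u‖_X and Φ_N(u;y) ≥ M − α₁‖u‖_X for all u ∈ X; (ii) for every r > 0 there is K(r) > 0 with Φ(u;y) ≤ K and Φ_N(u;y) ≤ K whenever ‖u‖_X < r. Suppose further there are α₃ ≥ 0, C ∈ ℝ and a function ψ with ψ(N) → 0 as N → ∞ such that |Φ(u;y) − Φ_N(u;y)| ≤ exp(α₃‖u‖_X + C) ψ(N) for all u ∈ X. If κ ≥ α₁ + 2α₃, then the posterior μ^y and its approximations μ^y_N are well-defined and there exists a constant D, independent of N, such that d_H(μ^y, μ^y_N) ≤ D ψ(N). -/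

import Mathlib

open MeasureTheory Filter

/-- The Hellinger distance between two measures with respect to a dominating measure `Λ`. -/
noncomputable def hellingerDist {X : Type*} [MeasurableSpace X]
    (μ₁ μ₂ Λ : Measure X) : ℝ :=
  Real.sqrt ((1 / 2) * ∫ u,
    (Real.sqrt ((μ₁.rnDeriv Λ u).toReal) - Real.sqrt ((μ₂.rnDeriv Λ u).toReal)) ^ 2 ∂Λ)

/-- The posterior measure given prior `μ₀` and likelihood potential `Φ`. -/
noncomputable def posteriorMeasure {X : Type*} [MeasurableSpace X]
    (μ₀ : Measure X) (Φ : X → ℝ) : Measure X :=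
  μ₀.withDensity fun u =>
    ENNReal.ofReal ((∫ v, Real.exp (-(Φ v)) ∂μ₀)⁻¹ * Real.exp (-(Φ u)))

/-!
With `f = exp (-Φ)` and `g = exp (-Φ_N)`, the Hellinger distance of the normalized densities is
controlled by the `L²(μ₀)` distance of the unnormalized square roots:
`‖√(f / Z_f) - √(g / Z_g)‖² ≤ (4 / Z_f) ‖√f - √g‖²`, because Cauchy–Schwarz gives
`(√Z_f - √Z_g)² ≤ ‖√f - √g‖²` for the normalizers. The lower bound on the potentials makes
`exp (-Φ / 2)` Lipschitz in `Φ` with constant `exp ((α₁ ‖u‖ - M) / 2) / 2`, so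
`|√f - √g|² ≤ exp (2C - M) / 4 · exp ((α₁ + 2α₃) ‖u‖) · ψ(N)²`, which is `μ₀`-integrable
because `α₁ + 2α₃ ≤ κ`. The normalizers are positive simply because the integrands are.
-/

lemma Real.abs_exp_sub_exp_le_of_le {x y c : ℝ} (hx : x ≤ c) (hy : y ≤ c) :
    |Real.exp x - Real.exp y| ≤ Real.exp c * |x - y| := by
  wlog hyx : y ≤ x generalizing x y
  · rw [abs_sub_comm, abs_sub_comm x y]
    exact this hy hx (le_of_not_ge hyx)
  rw [abs_of_nonneg (sub_nonneg.2 (Real.exp_le_exp.2 hyx)), abs_of_nonneg (sub_nonneg.2 hyx)]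
  calc Real.exp x - Real.exp y = Real.exp x * (1 - Real.exp (y - x)) := by
        rw [mul_sub, ← Real.exp_add]; ring_nf
    _ ≤ Real.exp c * (x - y) :=
        mul_le_mul (Real.exp_le_exp.2 hx) (by linarith [Real.add_one_le_exp (y - x)])
          (sub_nonneg.2 (Real.exp_le_one_iff.2 (by linarith))) (Real.exp_pos c).le

lemma sq_exp_neg_half_sub_le {a b m d : ℝ} (ha : m ≤ a) (hb : m ≤ b) (hd : |a - b| ≤ d) :
    (Real.exp (-a / 2) - Real.exp (-b / 2)) ^ 2 ≤ Real.exp (-m) / 4 * d ^ 2 := by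
  have h := Real.abs_exp_sub_exp_le_of_le (x := -a / 2) (y := -b / 2) (c := -m / 2)
    (by linarith) (by linarith)
  rw [show -a / 2 - -b / 2 = -(a - b) / 2 by ring, abs_div, abs_neg, abs_two] at h
  calc (Real.exp (-a / 2) - Real.exp (-b / 2)) ^ 2
      ≤ (Real.exp (-m / 2) * (d / 2)) ^ 2 := by
        rw [← sq_abs]
        gcongr
        exact h.trans (by gcongr)
    _ = Real.exp (-m) / 4 * d ^ 2 := by
        rw [mul_pow, ← Real.exp_nat_mul]
        ring_nf

section SqrtDensity

variable {α : Type*} [MeasurableSpace α] {μ : Measure α} {f g : α → ℝ}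

lemma MeasureTheory.Integrable.memLp_two_sqrt (hfi : Integrable f μ) (hf0 : 0 ≤ f) :
    MemLp (fun u => √(f u)) 2 μ :=
  (memLp_two_iff_integrable_sq
    (Real.continuous_sqrt.comp_aestronglyMeasurable hfi.aestronglyMeasurable)).2
    (by simpa only [Real.sq_sqrt (hf0 _)] using hfi)

lemma integral_sqrt_mul_sqrt_le (hf0 : 0 ≤ f) (hg0 : 0 ≤ g) (hfi : Integrable f μ)
    (hgi : Integrable g μ) :
    ∫ u, √(f u) * √(g u) ∂μ ≤ √(∫ u, f u ∂μ) * √(∫ u, g u ∂μ) := by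
  have h := integral_mul_le_Lp_mul_Lq_of_nonneg Real.HolderConjugate.two_two
    (ae_of_all μ fun u => Real.sqrt_nonneg (f u)) (ae_of_all μ fun u => Real.sqrt_nonneg (g u))
    (by simpa using hfi.memLp_two_sqrt hf0) (by simpa using hgi.memLp_two_sqrt hg0)
  simpa only [Real.rpow_two, Real.sq_sqrt (hf0 _), Real.sq_sqrt (hg0 _), ← Real.sqrt_eq_rpow]
    using h

lemma integral_sq_sqrt_sub_sqrt (hf0 : 0 ≤ f) (hg0 : 0 ≤ g) (hfi : Integrable f μ)
    (hgi : Integrable g μ) :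
    ∫ u, (√(f u) - √(g u)) ^ 2 ∂μ
      = ∫ u, f u ∂μ + ∫ u, g u ∂μ - 2 * ∫ u, √(f u) * √(g u) ∂μ := by
  have hfg : Integrable (fun u => √(f u) * √(g u)) μ :=
    (hfi.memLp_two_sqrt hf0).integrable_mul (hgi.memLp_two_sqrt hg0)
  have hsum : Integrable (fun u => f u + g u) μ := hfi.add hgi
  rw [← integral_add hfi hgi, ← integral_const_mul, ← integral_sub hsum (hfg.const_mul 2)]
  congr 1 with u
  rw [sub_sq, Real.sq_sqrt (hf0 u), Real.sq_sqrt (hg0 u)]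
  ring

lemma sq_sqrt_integral_sub_sqrt_integral_le (hf0 : 0 ≤ f) (hg0 : 0 ≤ g) (hfi : Integrable f μ)
    (hgi : Integrable g μ) :
    (√(∫ u, f u ∂μ) - √(∫ u, g u ∂μ)) ^ 2 ≤ ∫ u, (√(f u) - √(g u)) ^ 2 ∂μ := by
  rw [integral_sq_sqrt_sub_sqrt hf0 hg0 hfi hgi, sub_sq,
    Real.sq_sqrt (integral_nonneg hf0), Real.sq_sqrt (integral_nonneg hg0)]
  linarith [integral_sqrt_mul_sqrt_le hf0 hg0 hfi hgi]

lemma integral_sq_sqrt_normalized_sub_le (hf0 : 0 ≤ f) (hg0 : 0 ≤ g) (hfi : Integrable f μ)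
    (hgi : Integrable g μ) (hZf : 0 < ∫ u, f u ∂μ) (hZg : 0 < ∫ u, g u ∂μ) :
    ∫ u, (√((∫ v, f v ∂μ)⁻¹ * f u) - √((∫ v, g v ∂μ)⁻¹ * g u)) ^ 2 ∂μ
      ≤ 4 * (∫ v, f v ∂μ)⁻¹ * ∫ u, (√(f u) - √(g u)) ^ 2 ∂μ := by
  set Zf := ∫ v, f v ∂μ
  set Zg := ∫ v, g v ∂μ
  set H := ∫ u, (√(f u) - √(g u)) ^ 2 ∂μ
  set A := √Zf⁻¹
  set B := √Zg⁻¹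
  have hpointwise : ∀ u, (√(Zf⁻¹ * f u) - √(Zg⁻¹ * g u)) ^ 2
      ≤ 2 * Zf⁻¹ * (√(f u) - √(g u)) ^ 2 + 2 * (A - B) ^ 2 * g u := by
    intro u
    have key : (A * √(f u) - B * √(g u)) ^ 2
        ≤ 2 * A ^ 2 * (√(f u) - √(g u)) ^ 2 + 2 * (A - B) ^ 2 * √(g u) ^ 2 := by
      nlinarith [sq_nonneg (A * (√(f u) - √(g u)) - (A - B) * √(g u))]
    rwa [Real.sq_sqrt (inv_nonneg.2 hZf.le), Real.sq_sqrt (hg0 u), ← Real.sqrt_mul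
      (inv_nonneg.2 hZf.le), ← Real.sqrt_mul (inv_nonneg.2 hZg.le)] at key
  have hH : Integrable (fun u => (√(f u) - √(g u)) ^ 2) μ :=
    ((hfi.memLp_two_sqrt hf0).sub (hgi.memLp_two_sqrt hg0)).integrable_sq
  have hnormalizer : (A - B) ^ 2 * Zg ≤ Zf⁻¹ * H := by
    have hsq : (A - B) ^ 2 * Zg = Zf⁻¹ * (√Zf - √Zg) ^ 2 := by
      have key : ∀ a b : ℝ, 0 < a → 0 < b →
          (a⁻¹ - b⁻¹) ^ 2 * b ^ 2 = (a ^ 2)⁻¹ * (a - b) ^ 2 := by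
        intro a b ha hb
        field_simp
        ring
      simpa only [A, B, Real.sqrt_inv, Real.sq_sqrt hZf.le, Real.sq_sqrt hZg.le]
        using key _ _ (Real.sqrt_pos.2 hZf) (Real.sqrt_pos.2 hZg)
    rw [hsq]
    exact mul_le_mul_of_nonneg_left (sq_sqrt_integral_sub_sqrt_integral_le hf0 hg0 hfi hgi)
      (inv_nonneg.2 hZf.le)
  calc ∫ u, (√(Zf⁻¹ * f u) - √(Zg⁻¹ * g u)) ^ 2 ∂μ
      ≤ ∫ u, (2 * Zf⁻¹ * (√(f u) - √(g u)) ^ 2 + 2 * (A - B) ^ 2 * g u) ∂μ :=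
        integral_mono_of_nonneg (ae_of_all μ fun u => sq_nonneg _)
          ((hH.const_mul _).add (hgi.const_mul _)) (ae_of_all μ hpointwise)
    _ = 2 * Zf⁻¹ * H + 2 * ((A - B) ^ 2 * Zg) := by
        rw [integral_add (hH.const_mul _) (hgi.const_mul _), integral_const_mul,
          integral_const_mul]
        ring
    _ ≤ 4 * Zf⁻¹ * H := by linarith

end SqrtDensity

section NormWeight

variable {X : Type*} [MeasurableSpace X] {μ : Measure X}

lemma integrable_exp_mul_norm_of_le [SeminormedAddCommGroup X] [OpensMeasurableSpace X]
    {κ c : ℝ} (hκ : Integrable (fun u : X => Real.exp (κ * ‖u‖)) μ) (hc : c ≤ κ) :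
    Integrable (fun u : X => Real.exp (c * ‖u‖)) μ := by
  refine hκ.mono (by fun_prop) (ae_of_all μ fun u => ?_)
  simp only [Real.norm_eq_abs, Real.abs_exp]
  gcongr

variable [Norm X] {Φ Ψ : X → ℝ} {α₁ α₃ M C ε : ℝ}

lemma integrable_exp_neg_of_le (hΦ : AEStronglyMeasurable Φ μ)
    (hlb : ∀ u, M - α₁ * ‖u‖ ≤ Φ u) (hint : Integrable (fun u => Real.exp (α₁ * ‖u‖)) μ) :
    Integrable (fun u => Real.exp (-(Φ u))) μ := by
  refine (hint.const_mul (Real.exp (-M))).mono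
    (Real.continuous_exp.comp_aestronglyMeasurable hΦ.neg) (ae_of_all μ fun u => ?_)
  rw [Real.norm_eq_abs, Real.norm_eq_abs, Real.abs_exp, abs_of_pos (by positivity),
    ← Real.exp_add]
  exact Real.exp_le_exp.2 (by linarith [hlb u])

lemma integral_sq_exp_neg_half_sub_le (hΦ : ∀ u, M - α₁ * ‖u‖ ≤ Φ u)
    (hΨ : ∀ u, M - α₁ * ‖u‖ ≤ Ψ u)
    (happrox : ∀ u, |Φ u - Ψ u| ≤ Real.exp (α₃ * ‖u‖ + C) * ε)
    (hint : Integrable (fun u => Real.exp ((α₁ + 2 * α₃) * ‖u‖)) μ) :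
    ∫ u, (Real.exp (-Φ u / 2) - Real.exp (-Ψ u / 2)) ^ 2 ∂μ
      ≤ Real.exp (2 * C - M) / 4 * (∫ u, Real.exp ((α₁ + 2 * α₃) * ‖u‖) ∂μ) * ε ^ 2 := by
  have hpointwise : ∀ u, (Real.exp (-Φ u / 2) - Real.exp (-Ψ u / 2)) ^ 2
      ≤ Real.exp (2 * C - M) / 4 * ε ^ 2 * Real.exp ((α₁ + 2 * α₃) * ‖u‖) := by
    intro u
    refine (sq_exp_neg_half_sub_le (hΦ u) (hΨ u) (happrox u)).trans_eq ?_
    have hexp : Real.exp (-(M - α₁ * ‖u‖)) * Real.exp (α₃ * ‖u‖ + C) ^ 2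
        = Real.exp (2 * C - M) * Real.exp ((α₁ + 2 * α₃) * ‖u‖) := by
      rw [sq, ← Real.exp_add, ← Real.exp_add, ← Real.exp_add]
      ring_nf
    linear_combination ε ^ 2 / 4 * hexp
  calc ∫ u, (Real.exp (-Φ u / 2) - Real.exp (-Ψ u / 2)) ^ 2 ∂μ
      ≤ ∫ u, Real.exp (2 * C - M) / 4 * ε ^ 2 * Real.exp ((α₁ + 2 * α₃) * ‖u‖) ∂μ :=
        integral_mono_of_nonneg (ae_of_all μ fun u => sq_nonneg _) (hint.const_mul _)
          (ae_of_all μ hpointwise)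
    _ = _ := by rw [integral_const_mul]; ring

end NormWeight

section Posterior

variable {X : Type*} [MeasurableSpace X] {μ : Measure X} {Φ Ψ : X → ℝ}

lemma rnDeriv_posteriorMeasure_toReal [SigmaFinite μ] (hΦ : AEMeasurable Φ μ) :
    ∀ᵐ u ∂μ, ((posteriorMeasure μ Φ).rnDeriv μ u).toReal
      = (∫ v, Real.exp (-(Φ v)) ∂μ)⁻¹ * Real.exp (-(Φ u)) := by
  filter_upwards [Measure.rnDeriv_withDensity₀ μ (f := fun u =>
    ENNReal.ofReal ((∫ v, Real.exp (-(Φ v)) ∂μ)⁻¹ * Real.exp (-(Φ u)))) (by fun_prop)] with u hu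
  rw [posteriorMeasure, hu, ENNReal.toReal_ofReal
    (mul_nonneg (inv_nonneg.2 (integral_nonneg fun v => (Real.exp_pos _).le)) (Real.exp_pos _).le)]

lemma hellingerDist_posteriorMeasure_le [SigmaFinite μ] [NeZero μ]
    (hΦ : AEMeasurable Φ μ) (hΨ : AEMeasurable Ψ μ)
    (hΦi : Integrable (fun u => Real.exp (-(Φ u))) μ)
    (hΨi : Integrable (fun u => Real.exp (-(Ψ u))) μ) :
    hellingerDist (posteriorMeasure μ Φ) (posteriorMeasure μ Ψ) μ
      ≤ √(2 * (∫ u, Real.exp (-(Φ u)) ∂μ)⁻¹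
          * ∫ u, (Real.exp (-Φ u / 2) - Real.exp (-Ψ u / 2)) ^ 2 ∂μ) := by
  rw [hellingerDist, integral_congr_ae (by
    filter_upwards [rnDeriv_posteriorMeasure_toReal hΦ, rnDeriv_posteriorMeasure_toReal hΨ]
      with u hΦu hΨu
    rw [hΦu, hΨu])]
  have h := integral_sq_sqrt_normalized_sub_le (fun u => (Real.exp_pos (-(Φ u))).le)
    (fun u => (Real.exp_pos (-(Ψ u))).le) hΦi hΨi (integral_exp_pos hΦi) (integral_exp_pos hΨi)
  simp only [← Real.exp_half, neg_div] at h ⊢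
  exact Real.sqrt_le_sqrt (by linarith)

end Posterior

theorem posterior_consistent_approximation_general
    {X : Type*} [NormedAddCommGroup X]
    [MeasurableSpace X] [BorelSpace X]
    (μ₀ : Measure X) [IsProbabilityMeasure μ₀]
    (κ : ℝ)
    (hexp : Integrable (fun u => Real.exp (κ * ‖u‖)) μ₀)
    (Φ : X → ℝ) (ΦN : ℕ → X → ℝ)
    (hΦmeas : Measurable Φ) (hΦNmeas : ∀ N, Measurable (ΦN N))
    (α₁ M : ℝ)
    (hlb : ∀ u : X, M - α₁ * ‖u‖ ≤ Φ u)
    (hlbN : ∀ N, ∀ u : X, M - α₁ * ‖u‖ ≤ ΦN N u)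
    (α₃ C : ℝ) (hα₃ : 0 ≤ α₃)
    (ψ : ℕ → ℝ)
    (happrox : ∀ N, ∀ u : X, |Φ u - ΦN N u| ≤ Real.exp (α₃ * ‖u‖ + C) * ψ N)
    (hκα : α₁ + 2 * α₃ ≤ κ) :
    (Integrable (fun u => Real.exp (-(Φ u))) μ₀ ∧
      0 < ∫ u, Real.exp (-(Φ u)) ∂μ₀) ∧
    (∀ N, Integrable (fun u => Real.exp (-(ΦN N u))) μ₀ ∧
      0 < ∫ u, Real.exp (-(ΦN N u)) ∂μ₀) ∧
    ∃ D : ℝ, ∀ N,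
      hellingerDist (posteriorMeasure μ₀ Φ) (posteriorMeasure μ₀ (ΦN N)) μ₀ ≤
        D * ψ N := by
  have hψ : ∀ N, 0 ≤ ψ N := fun N =>
    (mul_nonneg_iff_of_pos_left (Real.exp_pos _)).1 ((abs_nonneg _).trans (happrox N 0))
  have hintα₁ := integrable_exp_mul_norm_of_le hexp (by linarith : α₁ ≤ κ)
  have hΦi := integrable_exp_neg_of_le hΦmeas.aestronglyMeasurable hlb hintα₁
  have hΦNi N := integrable_exp_neg_of_le (hΦNmeas N).aestronglyMeasurable (hlbN N) hintα₁
  refine ⟨⟨hΦi, integral_exp_pos hΦi⟩, fun N => ⟨hΦNi N, integral_exp_pos (hΦNi N)⟩,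
    √(2 * (∫ u, Real.exp (-(Φ u)) ∂μ₀)⁻¹ * (Real.exp (2 * C - M) / 4
      * ∫ u, Real.exp ((α₁ + 2 * α₃) * ‖u‖) ∂μ₀)), fun N => ?_⟩
  calc hellingerDist (posteriorMeasure μ₀ Φ) (posteriorMeasure μ₀ (ΦN N)) μ₀
      ≤ √(2 * (∫ u, Real.exp (-(Φ u)) ∂μ₀)⁻¹
          * ∫ u, (Real.exp (-Φ u / 2) - Real.exp (-ΦN N u / 2)) ^ 2 ∂μ₀) :=
        hellingerDist_posteriorMeasure_le hΦmeas.aemeasurable (hΦNmeas N).aemeasurable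
          hΦi (hΦNi N)
    _ ≤ √(2 * (∫ u, Real.exp (-(Φ u)) ∂μ₀)⁻¹ * (Real.exp (2 * C - M) / 4
          * (∫ u, Real.exp ((α₁ + 2 * α₃) * ‖u‖) ∂μ₀) * ψ N ^ 2)) := by
        gcongr
        exact integral_sq_exp_neg_half_sub_le hlb (hlbN N) (happrox N)
          (integrable_exp_mul_norm_of_le hexp hκα)
    _ = _ := by rw [← mul_assoc, Real.sqrt_mul' _ (sq_nonneg _), Real.sqrt_sq (hψ N)]

/-- Consistent approximation of the posterior: if `Φ` and its approximations `Φ_N`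
satisfy the lower bound and local upper bound uniformly in `N`, and
`|Φ(u) − Φ_N(u)| ≤ exp(α₃‖u‖ + C) ψ(N)` with `ψ(N) → 0`, and the prior has exponential
tails with `κ ≥ α₁ + 2α₃`, then the posteriors are well-defined and
`d_H(μ^y, μ^y_N) ≤ D ψ(N)` for a constant `D` independent of `N`. -/
theorem posterior_consistent_approximation
    {X Y : Type*} [NormedAddCommGroup X] [NormedSpace ℝ X] [CompleteSpace X]
    [MeasurableSpace X] [BorelSpace X]
    [NormedAddCommGroup Y] [NormedSpace ℝ Y] [CompleteSpace Y]
    (μ₀ : Measure X) [IsProbabilityMeasure μ₀]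
    (κ : ℝ) (hκ : 0 < κ)
    (hexp : Integrable (fun u => Real.exp (κ * ‖u‖)) μ₀)
    (y : Y) (Φ : X → ℝ) (ΦN : ℕ → X → ℝ)
    (hΦmeas : Measurable Φ) (hΦNmeas : ∀ N, Measurable (ΦN N))
    (α₁ M : ℝ) (hα₁ : 0 ≤ α₁)
    (hlb : ∀ u : X, M - α₁ * ‖u‖ ≤ Φ u)
    (hlbN : ∀ N, ∀ u : X, M - α₁ * ‖u‖ ≤ ΦN N u)
    (hub : ∀ r > (0 : ℝ), ∃ K > (0 : ℝ), ∀ u : X, ‖u‖ < r →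
      Φ u ≤ K ∧ ∀ N, ΦN N u ≤ K)
    (α₃ C : ℝ) (hα₃ : 0 ≤ α₃)
    (ψ : ℕ → ℝ) (hψ : Tendsto ψ atTop (nhds 0))
    (happrox : ∀ N, ∀ u : X, |Φ u - ΦN N u| ≤ Real.exp (α₃ * ‖u‖ + C) * ψ N)
    (hκα : α₁ + 2 * α₃ ≤ κ) :
    (Integrable (fun u => Real.exp (-(Φ u))) μ₀ ∧
      0 < ∫ u, Real.exp (-(Φ u)) ∂μ₀) ∧
    (∀ N, Integrable (fun u => Real.exp (-(ΦN N u))) μ₀ ∧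
      0 < ∫ u, Real.exp (-(ΦN N u)) ∂μ₀) ∧
    ∃ D : ℝ, ∀ N,
      hellingerDist (posteriorMeasure μ₀ Φ) (posteriorMeasure μ₀ (ΦN N)) μ₀ ≤
        D * ψ N :=
  posterior_consistent_approximation_general μ₀ κ hexp Φ ΦN hΦmeas hΦNmeas α₁ M hlb hlbN α₃ C hα₃ ψ
    happrox hκα
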